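/- arXiv:2404.02086 — 3 statements merged into one kernel-verified Lean document; each statement's English description precedes it below -/
import Mathlib

section
/- Let n ≥ 1, 0 < α < β, let M be an invertible n×n real matrix, let E ⊆ ℝⁿ be Lebesgue measurable, let u : ℝⁿ → ℝ be Lipschitz, and let X : ℝⁿ → ℝⁿ be a continuously differentiable vector field with compact support contained in the open unit ball B₁. Define Φ_t(x) := x + tX(x). Then there exist constants c > 0, depending only on β, the operator norm ‖M‖, and sup_x ‖DX(x)‖, and t₀ > 0 such that for every t ∈ (0, t₀): Φ_t is a bijection of ℝⁿ, and setting E_t := Φ_t(E) and u_t := u ∘ Φ_t^{−1}, one has ∫_{B₁} σ_{E_t}(y) |M ∇u_t(y)|² dy − ∫_{B₁} σ_E(x) |M ∇u(x)|² dx ≤ c·t·∫_{B₁} |∇u(x)|² dx, where ∇u and ∇u_t denote the almost-everywhere defined gradients of the Lipschitz functions u and u_t. -/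
open MeasureTheory

/-- `σ_E = α·1_E + β·1_{ℝⁿ∖E}`. -/
noncomputable def sigmaCoeff {n : ℕ} (α β : ℝ) (E : Set (EuclideanSpace ℝ (Fin n)))
    (x : EuclideanSpace ℝ (Fin n)) : ℝ :=
  Set.indicator E (fun _ => α) x + Set.indicator Eᶜ (fun _ => β) x

/-!
If `X` is `L`-Lipschitz and `t L < 1`, then `Φ_t = id + t X` is a Lipschitz perturbation of the
identity, hence a homeomorphism; it is the identity off `B₁`, so it maps `B₁` onto itself.
Substituting `y = Φ_t x` turns the first integral into
`∫_{B₁} |det DΦ_t x| σ_E(x) |M (DΦ_t x)⁻ᵀ ∇u(x)|² dx`, by the chain rule for `u_t ∘ Φ_t = u` at the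
almost every point where `u` is differentiable (Rademacher). As `DΦ_t = 1 + t DX` with
`‖t DX‖ ≤ t L`, smoothness of `det` gives `|det DΦ_t| ≤ 1 + O(t)` and a Neumann-series bound gives
`‖(DΦ_t)⁻¹ - 1‖ ≤ 2 t L`, so the new integrand exceeds `σ_E |M ∇u|²` by at most `O(t) |∇u|²`.
-/

open Set Metric Filter Function ContinuousLinearMap
open scoped NNReal

section NormedSpace

variable {F G : Type*} [NormedAddCommGroup F] [NormedSpace ℝ F]
  [NormedAddCommGroup G] [NormedSpace ℝ G]

theorem ContinuousLinearMap.contDiff_det [FiniteDimensional ℝ F] {k : WithTop ℕ∞} :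
    ContDiff ℝ k (fun T : F →L[ℝ] F => T.det) := by
  let b := Module.finBasis ℝ F
  let toMatrix : (F →L[ℝ] F) →L[ℝ] (Fin _ → Fin _ → ℝ) := LinearMap.toContinuousLinearMap
    ((LinearMap.toMatrix b b).toLinearMap ∘ₗ coeLM ℝ)
  have hdet : (fun T : F →L[ℝ] F => T.det) =
      fun T => ∑ σ : Equiv.Perm _, (σ.sign : ℝ) * ∏ i, toMatrix T (σ i) i := by
    ext T
    rw [ContinuousLinearMap.det, ← LinearMap.det_toMatrix b, Matrix.det_apply]
    simp only [Units.smul_def, zsmul_eq_mul]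
    rfl
  rw [hdet]
  fun_prop

theorem ContinuousLinearMap.exists_abs_det_one_add_sub_one_le [FiniteDimensional ℝ F] :
    ∃ C ≥ 0, ∃ r > 0, ∀ T : F →L[ℝ] F, ‖T‖ < r → |(1 + T).det - 1| ≤ C * ‖T‖ := by
  obtain ⟨K, s, hs, hK⟩ :=
    (contDiff_det (F := F) (k := 1)).contDiffAt.exists_lipschitzOnWith (x := 1)
  obtain ⟨r, hr, hball⟩ := Metric.mem_nhds_iff.1 hs
  refine ⟨K, K.2, r, hr, fun T hT => ?_⟩
  have h := hK.dist_le_mul (1 + T) (hball (by simpa using hT)) 1 (hball (mem_ball_self hr))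
  simpa [dist_eq_norm, ContinuousLinearMap.det] using h

theorem ContinuousLinearMap.norm_sub_one_le_of_mul_one_add_eq_one {A T : F →L[ℝ] F}
    (hT : ‖T‖ ≤ 1 / 2) (hA : A * (1 + T) = 1) : ‖A - 1‖ ≤ 2 * ‖T‖ := by
  have hsub : A - 1 = -(A * T) := by
    calc A - 1 = A - A * (1 + T) := by rw [hA]
      _ = -(A * T) := by noncomm_ring
  have hA1 : ‖A - 1‖ ≤ ‖A‖ * ‖T‖ := by
    rw [hsub, norm_neg]
    exact norm_mul_le _ _
  have hA2 : ‖A‖ ≤ 2 := by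
    have : ‖A‖ ≤ 1 + ‖A - 1‖ :=
      calc ‖A‖ = ‖1 + (A - 1)‖ := by rw [add_sub_cancel]
        _ ≤ ‖(1 : F →L[ℝ] F)‖ + ‖A - 1‖ := norm_add_le _ _
        _ ≤ 1 + ‖A - 1‖ := by gcongr; exact norm_id_le
    nlinarith [norm_nonneg A]
  nlinarith [norm_nonneg T]

theorem ContinuousLinearMap.sq_norm_apply_le_of_norm_sub_le (M : F →L[ℝ] G) {v w : F} {δ : ℝ}
    (hδ₀ : 0 ≤ δ) (hδ₁ : δ ≤ 1) (h : ‖w - v‖ ≤ δ * ‖v‖) :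
    ‖M w‖ ^ 2 ≤ ‖M v‖ ^ 2 + 3 * δ * ‖M‖ ^ 2 * ‖v‖ ^ 2 := by
  have hw : ‖M w‖ ≤ ‖M v‖ + ‖M‖ * (δ * ‖v‖) :=
    calc ‖M w‖ = ‖M v + M (w - v)‖ := by rw [← map_add, add_sub_cancel]
      _ ≤ ‖M v‖ + ‖M‖ * ‖w - v‖ := (norm_add_le _ _).trans (by gcongr; exact M.le_opNorm _)
      _ ≤ ‖M v‖ + ‖M‖ * (δ * ‖v‖) := by gcongr
  have hv : ‖M v‖ ≤ ‖M‖ * ‖v‖ := M.le_opNorm v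
  have hMv : ‖M v‖ * (‖M‖ * (δ * ‖v‖)) ≤ δ * ‖M‖ ^ 2 * ‖v‖ ^ 2 := by
    nlinarith [mul_le_mul_of_nonneg_right hv (by positivity : 0 ≤ ‖M‖ * (δ * ‖v‖))]
  have hsq : (‖M‖ * (δ * ‖v‖)) ^ 2 ≤ δ * ‖M‖ ^ 2 * ‖v‖ ^ 2 := by
    have : δ ^ 2 ≤ δ := by nlinarith
    nlinarith [mul_le_mul_of_nonneg_right this (by positivity : 0 ≤ ‖M‖ ^ 2 * ‖v‖ ^ 2)]
  nlinarith [pow_le_pow_left₀ (norm_nonneg _) hw 2]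

theorem exists_homeomorph_add_smul [CompleteSpace F] {X : F → F} {L : ℝ≥0}
    (hX : LipschitzWith L X) {t : ℝ} (ht : ‖t‖ * L < 1) :
    ∃ Φ : F ≃ₜ F, ⇑Φ = fun x => x + t • X x := by
  have hΦ : ApproximatesLinearOn (fun x => x + t • X x)
      ((ContinuousLinearEquiv.refl ℝ F : F ≃L[ℝ] F) : F →L[ℝ] F) univ (‖t‖₊ * L) := by
    intro x _ y _
    have hxy : x + t • X x - (y + t • X y) - (x - y) = t • (X x - X y) := by
      rw [smul_sub]; abel
    simp only [ContinuousLinearEquiv.coe_refl, coe_id', id_eq, hxy, norm_smul, NNReal.coe_mul,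
      coe_nnnorm, mul_assoc]
    exact mul_le_mul_of_nonneg_left (hX.norm_sub_le x y) (norm_nonneg t)
  refine ⟨hΦ.toHomeomorph _ ?_, rfl⟩
  rcases subsingleton_or_nontrivial F with hF | hF
  · exact Or.inl hF
  · right
    rw [← NNReal.coe_lt_coe]
    simpa using ht

theorem Homeomorph.exists_hasFDerivAt_symm [CompleteSpace F] (Φ : F ≃ₜ F) {T : F →L[ℝ] F}
    {x : F} (hΦ : HasFDerivAt Φ (1 + T) x) (hT : ‖T‖ < 1) :
    ∃ A : F →L[ℝ] F, A * (1 + T) = 1 ∧ HasFDerivAt Φ.symm A (Φ x) := by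
  let U := Units.oneSub (-T) (by rwa [norm_neg])
  have hU : (U : F →L[ℝ] F) = 1 + T := sub_neg_eq_add _ _
  refine ⟨↑U⁻¹, hU ▸ U.inv_mul, ?_⟩
  refine HasFDerivAt.of_local_left_inverse (f' := ContinuousLinearEquiv.ofUnit U)
    Φ.symm.continuous.continuousAt ?_ (Eventually.of_forall Φ.apply_symm_apply)
  rw [Φ.symm_apply_apply]
  exact hΦ.congr_fderiv hU.symm

theorem integral_image_sub_integral_le_of_abs_det_mul_le [FiniteDimensional ℝ F]
    [MeasurableSpace F] [BorelSpace F] (μ : Measure F) [μ.IsAddHaarMeasure] {s : Set F}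
    (hs : MeasurableSet s) {Φ : F → F} {Φ' : F → F →L[ℝ] F}
    (hΦ' : ∀ x ∈ s, HasFDerivWithinAt Φ (Φ' x) s x) (hinj : InjOn Φ s) {f g h : F → ℝ} {ε : ℝ}
    (hf : ∀ y, 0 ≤ f y) (hg : IntegrableOn g s μ) (hh : IntegrableOn h s μ)
    (hle : ∀ᵐ x ∂μ.restrict s, |(Φ' x).det| * f (Φ x) ≤ g x + ε * h x) :
    ∫ y in Φ '' s, f y ∂μ - ∫ x in s, g x ∂μ ≤ ε * ∫ x in s, h x ∂μ := by
  rw [integral_image_eq_integral_abs_det_fderiv_smul μ hs hΦ' hinj, ← integral_const_mul,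
    sub_le_iff_le_add', ← integral_add hg (hh.const_mul ε)]
  exact integral_mono_of_nonneg (Eventually.of_forall fun x => smul_nonneg (abs_nonneg _) (hf _))
    (hg.add (hh.const_mul ε)) hle

end NormedSpace

theorem Function.Bijective.image_eq_self_of_eqOn_compl {α : Type*} {f : α → α} {s : Set α}
    (hf : Bijective f) (h : EqOn f id sᶜ) : f '' s = s := by
  rw [← compl_inj_iff, ← image_compl_eq hf, h.image_eq_self]

section InnerProductSpace

variable {F G : Type*} [NormedAddCommGroup F] [InnerProductSpace ℝ F]
  [NormedAddCommGroup G] [InnerProductSpace ℝ G]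

theorem gradient_comp_of_hasFDerivAt [CompleteSpace F] [CompleteSpace G] {u : G → ℝ}
    {g : F → G} {A : F →L[ℝ] G} {y : F} (hu : DifferentiableAt ℝ u (g y)) (hg : HasFDerivAt g A y) :
    gradient (u ∘ g) y = adjoint A (gradient u (g y)) := by
  refine HasGradientAt.gradient ?_
  rw [hasGradientAt_iff_hasFDerivAt]
  refine ((hasGradientAt_iff_hasFDerivAt.1 hu.hasGradientAt).comp y hg).congr_fderiv ?_
  ext w
  simp [adjoint_inner_left]

theorem exists_abs_det_mul_sq_norm_adjoint_le [FiniteDimensional ℝ F] (M : F →L[ℝ] G) :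
    ∃ C ≥ 0, ∃ r > 0, ∀ T A : F →L[ℝ] F, ‖T‖ < r → A * (1 + T) = 1 → ∀ g : F,
      |(1 + T).det| * ‖M (adjoint A g)‖ ^ 2 ≤ ‖M g‖ ^ 2 + C * ‖T‖ * ‖g‖ ^ 2 := by
  obtain ⟨Cd, hCd, rd, hrd, hdet⟩ := exists_abs_det_one_add_sub_one_le (F := F)
  refine ⟨(4 * Cd + 6) * ‖M‖ ^ 2, by positivity, min rd (1 / 2), lt_min hrd one_half_pos,
    fun T A hT hA g => ?_⟩
  have hT₁ : ‖T‖ ≤ 1 / 2 := hT.le.trans (min_le_right _ _)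
  have hdet' : |(1 + T).det| ≤ 1 + Cd * ‖T‖ := by
    have := abs_sub_abs_le_abs_sub (1 + T).det 1
    rw [abs_one] at this
    linarith [hdet T (hT.trans_le (min_le_left _ _))]
  have hadj : ‖adjoint A g - g‖ ≤ 2 * ‖T‖ * ‖g‖ :=
    calc ‖adjoint A g - g‖ = ‖adjoint (A - 1) g‖ := by simp [map_sub, one_def, adjoint_id]
      _ ≤ ‖adjoint (A - 1)‖ * ‖g‖ := le_opNorm _ _
      _ = ‖A - 1‖ * ‖g‖ := by rw [LinearIsometryEquiv.norm_map]
      _ ≤ 2 * ‖T‖ * ‖g‖ := by gcongr; exact norm_sub_one_le_of_mul_one_add_eq_one hT₁ hA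
  have hMA := M.sq_norm_apply_le_of_norm_sub_le (by positivity) (by linarith) hadj
  have hMg : ‖M g‖ ^ 2 ≤ ‖M‖ ^ 2 * ‖g‖ ^ 2 := by
    rw [← mul_pow]; exact pow_le_pow_left₀ (norm_nonneg _) (M.le_opNorm g) 2
  calc |(1 + T).det| * ‖M (adjoint A g)‖ ^ 2
      ≤ (1 + Cd * ‖T‖) * (‖M g‖ ^ 2 + 3 * (2 * ‖T‖) * ‖M‖ ^ 2 * ‖g‖ ^ 2) :=
        mul_le_mul hdet' hMA (by positivity) (by positivity)
    _ ≤ ‖M g‖ ^ 2 + (4 * Cd + 6) * ‖M‖ ^ 2 * ‖T‖ * ‖g‖ ^ 2 := by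
        nlinarith [mul_le_mul_of_nonneg_left hMg (by positivity : 0 ≤ Cd * ‖T‖),
          mul_le_mul_of_nonneg_left hT₁ (by positivity : 0 ≤ Cd * ‖T‖ * ‖M‖ ^ 2 * ‖g‖ ^ 2)]

theorem measurable_gradient [CompleteSpace F] [MeasurableSpace F] [BorelSpace F] (u : F → ℝ) :
    Measurable (gradient u) :=
  (InnerProductSpace.toDual ℝ F).symm.continuous.measurable.comp (measurable_fderiv ℝ u)

theorem LipschitzWith.norm_gradient_le [CompleteSpace F] {K : ℝ≥0} {u : F → ℝ}
    (hu : LipschitzWith K u) (x : F) : ‖gradient u x‖ ≤ K :=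
  ((InnerProductSpace.toDual ℝ F).symm.norm_map _).trans_le (norm_fderiv_le_of_lipschitz ℝ hu)

theorem LipschitzWith.integrableOn_sq_norm_gradient [CompleteSpace F] [MeasurableSpace F]
    [BorelSpace F] {K : ℝ≥0} {u : F → ℝ} (hu : LipschitzWith K u) {μ : Measure F} {s : Set F}
    (hs : μ s ≠ ⊤) :
    IntegrableOn (fun x => ‖gradient u x‖ ^ 2) s μ :=
  Measure.integrableOn_of_bounded (M := K ^ 2) hs
    ((measurable_gradient u).norm.pow_const 2).aestronglyMeasurable
    (Eventually.of_forall fun x => by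
      rw [norm_pow, norm_norm]; exact pow_le_pow_left₀ (norm_nonneg _) (hu.norm_gradient_le x) 2)

end InnerProductSpace

section Euclidean

variable {n : ℕ} {α β : ℝ} {E : Set (EuclideanSpace ℝ (Fin n))}

theorem sigmaCoeff_nonneg (hα : 0 ≤ α) (hβ : 0 ≤ β) (x : EuclideanSpace ℝ (Fin n)) :
    0 ≤ sigmaCoeff α β E x :=
  add_nonneg (indicator_nonneg (fun _ _ => hα) x) (indicator_nonneg (fun _ _ => hβ) x)

theorem sigmaCoeff_le (hαβ : α ≤ β) (x : EuclideanSpace ℝ (Fin n)) : sigmaCoeff α β E x ≤ β := by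
  by_cases hx : x ∈ E <;> simp [sigmaCoeff, hx, hαβ]

theorem sigmaCoeff_image_apply {Φ : EuclideanSpace ℝ (Fin n) → EuclideanSpace ℝ (Fin n)}
    (hΦ : Injective Φ) (x : EuclideanSpace ℝ (Fin n)) :
    sigmaCoeff α β (Φ '' E) (Φ x) = sigmaCoeff α β E x := by
  by_cases hx : x ∈ E <;> simp [sigmaCoeff, hx, hΦ.mem_set_image]

theorem measurable_sigmaCoeff (hE : MeasurableSet E) : Measurable (sigmaCoeff α β E) :=
  (measurable_const.indicator hE).add (measurable_const.indicator hE.compl)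

theorem integrableOn_sigmaCoeff_mul_sq_norm (hE : MeasurableSet E) (hα : 0 ≤ α) (hαβ : α ≤ β)
    (M : EuclideanSpace ℝ (Fin n) →L[ℝ] EuclideanSpace ℝ (Fin n))
    {f : EuclideanSpace ℝ (Fin n) → EuclideanSpace ℝ (Fin n)} (hf : Measurable f)
    {s : Set (EuclideanSpace ℝ (Fin n))} (hfs : IntegrableOn (fun x => ‖f x‖ ^ 2) s) :
    IntegrableOn (fun x => sigmaCoeff α β E x * ‖M (f x)‖ ^ 2) s := by
  refine (hfs.const_mul (β * ‖M‖ ^ 2)).mono'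
    ((measurable_sigmaCoeff hE).mul ((M.continuous.measurable.comp hf).norm.pow_const 2)
      ).aestronglyMeasurable (Eventually.of_forall fun x => ?_)
  have hσ := sigmaCoeff_nonneg (E := E) hα (hα.trans hαβ) x
  rw [Real.norm_of_nonneg (by positivity), mul_assoc, ← mul_pow]
  exact mul_le_mul (sigmaCoeff_le hαβ x) (pow_le_pow_left₀ (norm_nonneg _) (M.le_opNorm _) 2)
    (by positivity) (hα.trans hαβ)

theorem ae_abs_det_mul_sigmaCoeff_image_le (hα : 0 ≤ α) (hαβ : α ≤ β)
    {u : EuclideanSpace ℝ (Fin n) → ℝ} {K : ℝ≥0} (hu : LipschitzWith K u)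
    (Φ : EuclideanSpace ℝ (Fin n) ≃ₜ EuclideanSpace ℝ (Fin n))
    {T : EuclideanSpace ℝ (Fin n) → EuclideanSpace ℝ (Fin n) →L[ℝ] EuclideanSpace ℝ (Fin n)}
    (hΦ : ∀ x, HasFDerivAt Φ (1 + T x) x) (hT : ∀ x, ‖T x‖ < 1)
    (M : EuclideanSpace ℝ (Fin n) →L[ℝ] EuclideanSpace ℝ (Fin n)) {δ : ℝ} (hδ : 0 ≤ δ)
    (hM : ∀ x A, A * (1 + T x) = 1 → ∀ g,
      |(1 + T x).det| * ‖M (adjoint A g)‖ ^ 2 ≤ ‖M g‖ ^ 2 + δ * ‖g‖ ^ 2) :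
    ∀ᵐ x, |(1 + T x).det| *
        (sigmaCoeff α β (Φ '' E) (Φ x) * ‖M (gradient (u ∘ Φ.symm) (Φ x))‖ ^ 2) ≤
      sigmaCoeff α β E x * ‖M (gradient u x)‖ ^ 2 + β * δ * ‖gradient u x‖ ^ 2 := by
  filter_upwards [hu.ae_differentiableAt] with x hx
  obtain ⟨A, hA, hΦsymm⟩ := Φ.exists_hasFDerivAt_symm (hΦ x) (hT x)
  rw [gradient_comp_of_hasFDerivAt (by rwa [Φ.symm_apply_apply]) hΦsymm, Φ.symm_apply_apply,
    sigmaCoeff_image_apply Φ.injective]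
  have hσ₀ := sigmaCoeff_nonneg (E := E) hα (hα.trans hαβ) x
  have hσβ := sigmaCoeff_le (E := E) hαβ x
  calc |(1 + T x).det| * (sigmaCoeff α β E x * ‖M (adjoint A (gradient u x))‖ ^ 2)
      = sigmaCoeff α β E x * (|(1 + T x).det| * ‖M (adjoint A (gradient u x))‖ ^ 2) := by ring
    _ ≤ sigmaCoeff α β E x * (‖M (gradient u x)‖ ^ 2 + δ * ‖gradient u x‖ ^ 2) := by
        gcongr; exact hM x A hA _
    _ ≤ sigmaCoeff α β E x * ‖M (gradient u x)‖ ^ 2 + β * δ * ‖gradient u x‖ ^ 2 := by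
        rw [mul_add, mul_assoc β]; gcongr

theorem integral_sigmaCoeff_image_sub_le (hE : MeasurableSet E) (hα : 0 ≤ α) (hαβ : α ≤ β)
    {u : EuclideanSpace ℝ (Fin n) → ℝ} {K : ℝ≥0} (hu : LipschitzWith K u)
    (Φ : EuclideanSpace ℝ (Fin n) ≃ₜ EuclideanSpace ℝ (Fin n))
    {T : EuclideanSpace ℝ (Fin n) → EuclideanSpace ℝ (Fin n) →L[ℝ] EuclideanSpace ℝ (Fin n)}
    (hΦ : ∀ x, HasFDerivAt Φ (1 + T x) x) (hT : ∀ x, ‖T x‖ < 1)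
    (M : EuclideanSpace ℝ (Fin n) →L[ℝ] EuclideanSpace ℝ (Fin n)) {δ : ℝ} (hδ : 0 ≤ δ)
    (hM : ∀ x A, A * (1 + T x) = 1 → ∀ g,
      |(1 + T x).det| * ‖M (adjoint A g)‖ ^ 2 ≤ ‖M g‖ ^ 2 + δ * ‖g‖ ^ 2)
    {s : Set (EuclideanSpace ℝ (Fin n))} (hs : MeasurableSet s) (hs_fin : volume s ≠ ⊤)
    (hΦs : Φ '' s = s) :
    (∫ y in s, sigmaCoeff α β (Φ '' E) y * ‖M (gradient (u ∘ Φ.symm) y)‖ ^ 2) -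
        ∫ x in s, sigmaCoeff α β E x * ‖M (gradient u x)‖ ^ 2 ≤
      β * δ * ∫ x in s, ‖gradient u x‖ ^ 2 := by
  have hgrad := hu.integrableOn_sq_norm_gradient hs_fin
  nth_rewrite 1 [← hΦs]
  exact integral_image_sub_integral_le_of_abs_det_mul_le volume hs
    (fun x _ => (hΦ x).hasFDerivWithinAt) Φ.injective.injOn
    (fun y => mul_nonneg (sigmaCoeff_nonneg hα (hα.trans hαβ) y) (sq_nonneg _))
    (integrableOn_sigmaCoeff_mul_sq_norm hE hα hαβ M (measurable_gradient u) hgrad) hgrad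
    (ae_restrict_of_ae (ae_abs_det_mul_sigmaCoeff_image_le hα hαβ hu Φ hΦ hT M hδ hM))

end Euclidean

theorem first_variation_bulk_term_general
    (n : ℕ) (α β : ℝ) (hα : 0 < α) (hαβ : α < β)
    (M : Matrix (Fin n) (Fin n) ℝ)
    (E : Set (EuclideanSpace ℝ (Fin n))) (hE : MeasurableSet E)
    (u : EuclideanSpace ℝ (Fin n) → ℝ) (K : NNReal) (hu : LipschitzWith K u)
    (X : EuclideanSpace ℝ (Fin n) → EuclideanSpace ℝ (Fin n))
    (hX : ContDiff ℝ 1 X)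
    (hXsupp : tsupport X ⊆ Metric.ball (0 : EuclideanSpace ℝ (Fin n)) 1) :
    ∃ c > (0 : ℝ), ∃ t₀ > (0 : ℝ), ∀ t ∈ Set.Ioo (0 : ℝ) t₀,
      Function.Bijective (fun x => x + t • X x) ∧
      (∫ y in Metric.ball (0 : EuclideanSpace ℝ (Fin n)) 1,
          sigmaCoeff α β ((fun x => x + t • X x) '' E) y *
            ‖Matrix.toEuclideanLin M
              (gradient (u ∘ Function.invFun
                (fun x : EuclideanSpace ℝ (Fin n) => x + t • X x)) y)‖ ^ 2) -
        (∫ x in Metric.ball (0 : EuclideanSpace ℝ (Fin n)) 1,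
          sigmaCoeff α β E x * ‖Matrix.toEuclideanLin M (gradient u x)‖ ^ 2) ≤
      c * t * ∫ x in Metric.ball (0 : EuclideanSpace ℝ (Fin n)) 1, ‖gradient u x‖ ^ 2 := by
  have hβ : 0 < β := hα.trans hαβ
  obtain ⟨L, hXL⟩ := hX.lipschitzWith_of_hasCompactSupport
    ((isCompact_closedBall 0 1).of_isClosed_subset (isClosed_tsupport X)
      (hXsupp.trans ball_subset_closedBall)) one_ne_zero
  obtain ⟨C, hC, r, hr, hbulk⟩ :=
    exists_abs_det_mul_sq_norm_adjoint_le (Matrix.toEuclideanLin M).toContinuousLinearMap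
  refine ⟨β * C * L + 1, by positivity, min r 1 / (L + 1), by positivity, fun t ⟨ht₀, ht⟩ => ?_⟩
  have htL : t * L < min r 1 := by
    rw [lt_div_iff₀ (by positivity)] at ht; nlinarith
  have hT : ∀ x, ‖t • fderiv ℝ X x‖ ≤ t * L := fun x => by
    rw [norm_smul, Real.norm_of_nonneg ht₀.le]
    exact mul_le_mul_of_nonneg_left (norm_fderiv_le_of_lipschitz ℝ hXL) ht₀.le
  obtain ⟨Φ, hΦ⟩ := exists_homeomorph_add_smul hXL (t := t)
    (by rw [Real.norm_of_nonneg ht₀.le]; linarith [min_le_right r 1])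
  have hΦ' : ∀ x, HasFDerivAt Φ (1 + t • fderiv ℝ X x) x := fun x =>
    hΦ ▸ (hasFDerivAt_id x).add (((hX.differentiable one_ne_zero) x).hasFDerivAt.const_smul t)
  have hball : Φ '' ball 0 1 = ball 0 1 := Φ.bijective.image_eq_self_of_eqOn_compl fun x hx => by
    simp [hΦ, image_eq_zero_of_notMem_tsupport fun h => hx (hXsupp h)]
  rw [← hΦ, (leftInverse_invFun Φ.injective).eq_rightInverse Φ.apply_symm_apply,
    show ⇑(Matrix.toEuclideanLin M) = ⇑(Matrix.toEuclideanLin M).toContinuousLinearMap from rfl]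
  refine ⟨Φ.bijective, (integral_sigmaCoeff_image_sub_le hE hα.le hαβ.le hu Φ hΦ'
    (fun x => (hT x).trans_lt (htL.trans_le (min_le_right r 1))) _ (δ := C * (t * L))
    (by positivity)
    (fun x A hA g => (hbulk _ A ((hT x).trans_lt (htL.trans_le (min_le_left r 1))) hA g).trans
      (by gcongr; exact hT x))
    measurableSet_ball measure_ball_lt_top.ne hball).trans ?_⟩
  exact mul_le_mul_of_nonneg_right (by nlinarith) (integral_nonneg fun x => sq_nonneg _)

/-- First variation of the bulk term: for `σ_E = α·1_E + β·1_{Eᶜ}`,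
`u` Lipschitz, `M` invertible and `X` a `C¹` vector field compactly supported in `B₁`,
there are `c > 0` and `t₀ > 0` such that for `0 < t < t₀`, with `Φ_t(x) = x + tX(x)`,
`E_t = Φ_t(E)`, `u_t = u ∘ Φ_t⁻¹`,
`∫_{B₁} σ_{E_t}|M∇u_t|² − ∫_{B₁} σ_E|M∇u|² ≤ c t ∫_{B₁} |∇u|²`. -/
theorem first_variation_bulk_term
    (n : ℕ) (hn : 1 ≤ n) (α β : ℝ) (hα : 0 < α) (hαβ : α < β)
    (M : Matrix (Fin n) (Fin n) ℝ) (hM : IsUnit M.det)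
    (E : Set (EuclideanSpace ℝ (Fin n))) (hE : MeasurableSet E)
    (u : EuclideanSpace ℝ (Fin n) → ℝ) (K : NNReal) (hu : LipschitzWith K u)
    (X : EuclideanSpace ℝ (Fin n) → EuclideanSpace ℝ (Fin n))
    (hX : ContDiff ℝ 1 X)
    (hXsupp : tsupport X ⊆ Metric.ball (0 : EuclideanSpace ℝ (Fin n)) 1) :
    ∃ c > (0 : ℝ), ∃ t₀ > (0 : ℝ), ∀ t ∈ Set.Ioo (0 : ℝ) t₀,
      Function.Bijective (fun x => x + t • X x) ∧
      (∫ y in Metric.ball (0 : EuclideanSpace ℝ (Fin n)) 1,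
          sigmaCoeff α β ((fun x => x + t • X x) '' E) y *
            ‖Matrix.toEuclideanLin M
              (gradient (u ∘ Function.invFun
                (fun x : EuclideanSpace ℝ (Fin n) => x + t • X x)) y)‖ ^ 2) -
        (∫ x in Metric.ball (0 : EuclideanSpace ℝ (Fin n)) 1,
          sigmaCoeff α β E x * ‖Matrix.toEuclideanLin M (gradient u x)‖ ^ 2) ≤
      c * t * ∫ x in Metric.ball (0 : EuclideanSpace ℝ (Fin n)) 1, ‖gradient u x‖ ^ 2 :=
  first_variation_bulk_term_general n α β hα hαβ M E hE u K hu X hX hXsupp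
end

section
/- Let n ≥ 1, r > 0 and σ ∈ (0, 2^{−n}), and let f be the map defined by f(x) = (1 − σ(2ⁿ − 1))x if |x| < r/2; f(x) = x + σ(1 − rⁿ/|x|ⁿ)x if r/2 ≤ |x| < r; f(x) = x if |x| ≥ r. Then for every Lebesgue-measurable set E ⊆ ℝⁿ of finite measure, |f(E)| − |E| ≤ 2ⁿ n ω_n σ rⁿ. -/
/-!
With `φ(t) = 1 + σ(1 - rⁿ/tⁿ)`, the map is `x ↦ φ(‖x‖) x` on the annulus `r/2 ≤ ‖x‖ < r`,
the dilation by `φ(r/2) = 1 - σ(2ⁿ - 1)` on the closed ball of radius `r/2`, and the identity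
outside `B_r`. Since `rⁿ/tⁿ ∈ [1, 2ⁿ]` on the annulus, `φ` takes values in `(0, 1]` there, so
the dilation does not increase volume. On the open annulus the Jacobian of a radial map is
`φⁿ⁻¹ (φ + t φ')`, and `t φ'(t) = σ n rⁿ/tⁿ ≤ σ n 2ⁿ`, so it is at most `1 + σ n 2ⁿ`.
Hence `|f(E)| ≤ |E| + σ n 2ⁿ |E ∩ B_r| ≤ |E| + σ n 2ⁿ ωₙ rⁿ`.
-/

open MeasureTheory

/-- The volume-adjusting bi-Lipschitz map of the penalization argument:
`f(x) = (1 − σ(2ⁿ − 1))x` if `|x| < r/2`; `f(x) = x + σ(1 − rⁿ/|x|ⁿ)x` if `r/2 ≤ |x| < r`;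
`f(x) = x` if `|x| ≥ r`. -/
noncomputable def volMap (n : ℕ) (r σ : ℝ) (x : EuclideanSpace ℝ (Fin n)) :
    EuclideanSpace ℝ (Fin n) :=
  if ‖x‖ < r / 2 then (1 - σ * (2 ^ n - 1)) • x
  else if ‖x‖ < r then x + (σ * (1 - r ^ n / ‖x‖ ^ n)) • x
  else x

open scoped Pointwise

section RadialMaps

variable {F : Type*} [NormedAddCommGroup F] [InnerProductSpace ℝ F]

theorem hasFDerivAt_norm_of_ne_zero {x : F} (hx : x ≠ 0) :
    HasFDerivAt (‖·‖) (‖x‖⁻¹ • innerSL ℝ x) x := by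
  have hsqrt := (Real.hasDerivAt_sqrt (pow_ne_zero 2 (norm_ne_zero_iff.mpr hx))).comp_hasFDerivAt x
    (hasStrictFDerivAt_norm_sq x).hasFDerivAt
  simp only [Function.comp_def, Real.sqrt_sq (norm_nonneg _)] at hsqrt
  refine hsqrt.congr_fderiv ?_
  ext v
  simp only [smul_apply, innerSL_apply_apply, smul_eq_mul, nsmul_eq_mul, Nat.cast_ofNat]
  field_simp

theorem hasFDerivAt_comp_norm_smul_self {φ : ℝ → ℝ} {φ' : ℝ} {x : F}
    (hφ : HasDerivAt φ φ' ‖x‖) (hx : x ≠ 0) :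
    HasFDerivAt (fun y => φ ‖y‖ • y)
      (φ ‖x‖ • ContinuousLinearMap.id ℝ F + (φ' / ‖x‖) • (innerSL ℝ x).smulRight x) x := by
  refine ((hφ.comp_hasFDerivAt x (hasFDerivAt_norm_of_ne_zero hx)).smul
    (hasFDerivAt_id x)).congr_fderiv ?_
  ext v
  simp [div_eq_mul_inv, smul_smul]

end RadialMaps

theorem det_smul_id_add_smul_innerSL_smulRight {ι : Type*} [Fintype ι] [DecidableEq ι]
    {a : ℝ} (ha : a ≠ 0) (b : ℝ) (x : EuclideanSpace ℝ ι) :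
    (a • ContinuousLinearMap.id ℝ (EuclideanSpace ℝ ι) + b • (innerSL ℝ x).smulRight x).det
      = a ^ Fintype.card ι * (1 + a⁻¹ * b * ‖x‖ ^ 2) := by
  let e := (EuclideanSpace.basisFun ι ℝ).toBasis
  rw [ContinuousLinearMap.det, ← LinearMap.det_toMatrix e]
  have hmatrix : LinearMap.toMatrix e e
      (a • ContinuousLinearMap.id ℝ (EuclideanSpace ℝ ι) + b • (innerSL ℝ x).smulRight x : _)
      = a • (1 + Matrix.replicateCol Unit (fun i => a⁻¹ * b * x i) *
          Matrix.replicateRow Unit (fun j => x j)) := by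
    ext i j
    simp [e, LinearMap.toMatrix_apply, Matrix.one_apply, Matrix.mul_apply,
      EuclideanSpace.inner_single_right, mul_add, mul_assoc, mul_inv_cancel_left₀ ha,
      mul_comm (x j) (x i)]
  rw [hmatrix, Matrix.det_smul, Matrix.det_one_add_replicateCol_mul_replicateRow,
    EuclideanSpace.norm_sq_eq]
  simp only [dotProduct, Real.norm_eq_abs, sq_abs, Finset.mul_sum]
  congr 2
  exact Finset.sum_congr rfl fun i _ => by ring

theorem abs_pow_mul_one_add_inv_mul_le {a c K : ℝ} {n : ℕ} (hn : 1 ≤ n) (ha₀ : 0 < a)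
    (ha₁ : a ≤ 1) (hc₀ : 0 ≤ c) (hcK : c ≤ K) : |a ^ n * (1 + a⁻¹ * c)| ≤ 1 + K := by
  have hexpand : a ^ n * (1 + a⁻¹ * c) = a ^ n + a ^ (n - 1) * c := by
    rw [pow_sub₀ a ha₀.ne' hn, pow_one]
    ring
  have han : a ^ n ≤ 1 := pow_le_one₀ ha₀.le ha₁
  have han' : a ^ (n - 1) ≤ 1 := pow_le_one₀ ha₀.le ha₁
  rw [hexpand, abs_of_nonneg (by positivity)]
  nlinarith [pow_nonneg ha₀.le (n - 1)]

noncomputable def volMapProfile (n : ℕ) (r σ t : ℝ) : ℝ := 1 + σ * (1 - r ^ n / t ^ n)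

noncomputable def volMapFDeriv (n : ℕ) (r σ : ℝ) (x : EuclideanSpace ℝ (Fin n)) :
    EuclideanSpace ℝ (Fin n) →L[ℝ] EuclideanSpace ℝ (Fin n) :=
  volMapProfile n r σ ‖x‖ • ContinuousLinearMap.id ℝ _ +
    (σ * n * r ^ n / ‖x‖ ^ (n + 1) / ‖x‖) • (innerSL ℝ x).smulRight x

theorem hasDerivAt_volMapProfile (n : ℕ) (r σ : ℝ) {t : ℝ} (ht : t ≠ 0) :
    HasDerivAt (volMapProfile n r σ) (σ * n * r ^ n / t ^ (n + 1)) t := by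
  have h := (((hasDerivAt_pow n t).inv (pow_ne_zero n ht)).const_mul (r ^ n)).const_sub 1
    |>.const_mul σ |>.const_add 1
  refine (h.congr_deriv ?_).congr_of_eventuallyEq (Filter.Eventually.of_forall fun s => ?_)
  · rcases n with _ | m
    · simp
    rw [Nat.add_sub_cancel]
    field_simp
    ring
  · simp [volMapProfile, div_eq_mul_inv]

section VolMapProfile

variable {n : ℕ} {r σ t : ℝ}

theorem pow_div_pow_mem_Icc (hr : 0 < r) (ht₁ : r / 2 ≤ t) (ht₂ : t ≤ r) :
    r ^ n / t ^ n ∈ Set.Icc 1 (2 ^ n) := by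
  have ht₀ : 0 < t := by linarith
  rw [← div_pow]
  refine ⟨one_le_pow₀ ((one_le_div ht₀).mpr ht₂), pow_le_pow_left₀ (by positivity) ?_ n⟩
  rw [div_le_iff₀ ht₀]
  linarith

theorem volMapProfile_mem_Ioc (hr : 0 < r) (hσ : σ ∈ Set.Ioo (0 : ℝ) (2 ^ n)⁻¹)
    (ht₁ : r / 2 ≤ t) (ht₂ : t ≤ r) : volMapProfile n r σ t ∈ Set.Ioc 0 1 := by
  obtain ⟨hq₁, hq₂⟩ := pow_div_pow_mem_Icc (n := n) hr ht₁ ht₂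
  have hσ₁ : σ * 2 ^ n < 1 := by
    rw [← lt_div_iff₀ (by positivity), one_div]
    exact hσ.2
  have hσ₀ := hσ.1
  constructor <;> unfold volMapProfile <;> nlinarith

end VolMapProfile

section VolMap

variable {n : ℕ} {r σ : ℝ} {x : EuclideanSpace ℝ (Fin n)}

theorem volMap_eq_volMapProfile_smul (hx₁ : r / 2 ≤ ‖x‖) (hx₂ : ‖x‖ < r) :
    volMap n r σ x = volMapProfile n r σ ‖x‖ • x := by
  simp [volMap, volMapProfile, not_lt.mpr hx₁, hx₂, add_smul]

theorem volMap_of_norm_le_half (hr : 0 < r) (hx : ‖x‖ ≤ r / 2) :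
    volMap n r σ x = volMapProfile n r σ (r / 2) • x := by
  rcases hx.lt_or_eq with hx | hx
  · have hratio : r ^ n / (r / 2) ^ n = 2 ^ n := by
      rw [div_pow, div_div_eq_mul_div, mul_div_cancel_left₀ _ (by positivity)]
    simp only [volMap, if_pos hx, volMapProfile, hratio]
    ring_nf
  · rw [volMap_eq_volMapProfile_smul hx.ge (by linarith), hx]

theorem volMap_of_le_norm (hr : 0 ≤ r) (hx : r ≤ ‖x‖) : volMap n r σ x = x := by
  simp [volMap, not_lt.mpr hx, not_lt.mpr ((half_le_self hr).trans hx)]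

theorem hasFDerivAt_volMap (hx : x ∈ Metric.ball 0 r \ Metric.closedBall 0 (r / 2)) :
    HasFDerivAt (volMap n r σ) (volMapFDeriv n r σ x) x := by
  have hx₀ : x ≠ 0 := by
    rintro rfl
    simp only [Set.mem_sdiff, Metric.mem_ball, Metric.mem_closedBall, dist_self, not_le] at hx
    linarith [hx.1, hx.2]
  refine (hasFDerivAt_comp_norm_smul_self (hasDerivAt_volMapProfile n r σ
    (norm_ne_zero_iff.mpr hx₀)) hx₀).congr_of_eventuallyEq ?_
  filter_upwards [(Metric.isOpen_ball.sdiff Metric.isClosed_closedBall).mem_nhds hx] with y hy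
  simp only [Set.mem_sdiff, mem_ball_zero_iff, Metric.mem_closedBall, dist_zero_right,
    not_le] at hy
  exact volMap_eq_volMapProfile_smul hy.2.le hy.1

theorem abs_det_volMapFDeriv_le (hn : 1 ≤ n) (hσ : σ ∈ Set.Ioo (0 : ℝ) (2 ^ n)⁻¹)
    (hx : x ∈ Metric.ball 0 r \ Metric.closedBall 0 (r / 2)) :
    |(volMapFDeriv n r σ x).det| ≤ 1 + σ * n * 2 ^ n := by
  simp only [Set.mem_sdiff, mem_ball_zero_iff, Metric.mem_closedBall, dist_zero_right,
    not_le] at hx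
  have hr : 0 < r := by linarith [norm_nonneg x, hx.1]
  obtain ⟨ha₀, ha₁⟩ := volMapProfile_mem_Ioc hr hσ hx.2.le hx.1.le
  obtain ⟨-, hq⟩ := pow_div_pow_mem_Icc (n := n) hr hx.2.le hx.1.le
  have hc : σ * n * r ^ n / ‖x‖ ^ (n + 1) / ‖x‖ * ‖x‖ ^ 2 = σ * n * (r ^ n / ‖x‖ ^ n) := by
    have hx₀ : ‖x‖ ≠ 0 := by linarith [hx.2]
    field_simp
    ring
  rw [volMapFDeriv, det_smul_id_add_smul_innerSL_smulRight ha₀.ne', Fintype.card_fin,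
    mul_assoc _ _ (_ ^ 2), hc]
  have hσ₀ := hσ.1
  exact abs_pow_mul_one_add_inv_mul_le hn ha₀ ha₁ (by positivity)
    (mul_le_mul_of_nonneg_left hq (by positivity))

end VolMap

section VolMapImage

variable {n : ℕ} {r σ : ℝ} {s : Set (EuclideanSpace ℝ (Fin n))}

theorem volume_image_volMap_le_of_subset_closedBall (hr : 0 < r)
    (hσ : σ ∈ Set.Ioo (0 : ℝ) (2 ^ n)⁻¹) (hs : s ⊆ Metric.closedBall 0 (r / 2)) :
    volume (volMap n r σ '' s) ≤ volume s := by
  have himage : volMap n r σ '' s = volMapProfile n r σ (r / 2) • s := by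
    rw [← Set.image_smul]
    exact Set.image_congr fun x hx =>
      volMap_of_norm_le_half hr (mem_closedBall_zero_iff.mp (hs hx))
  obtain ⟨hc₀, hc₁⟩ := volMapProfile_mem_Ioc hr hσ le_rfl (half_le_self hr.le)
  rw [himage, Measure.addHaar_smul, abs_of_nonneg (pow_nonneg hc₀.le _)]
  exact mul_le_of_le_one_left' (ENNReal.ofReal_le_one.mpr (pow_le_one₀ hc₀.le hc₁))

theorem volume_image_volMap_le_of_subset_annulus (hn : 1 ≤ n)
    (hσ : σ ∈ Set.Ioo (0 : ℝ) (2 ^ n)⁻¹) (hs : MeasurableSet s)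
    (hsA : s ⊆ Metric.ball 0 r \ Metric.closedBall 0 (r / 2)) :
    volume (volMap n r σ '' s) ≤ ENNReal.ofReal (1 + σ * n * 2 ^ n) * volume s :=
  calc volume (volMap n r σ '' s)
      ≤ ∫⁻ x in s, ENNReal.ofReal |(volMapFDeriv n r σ x).det| :=
        addHaar_image_le_lintegral_abs_det_fderiv volume hs
          fun _ hx => (hasFDerivAt_volMap (hsA hx)).hasFDerivWithinAt
    _ ≤ ∫⁻ _ in s, ENNReal.ofReal (1 + σ * n * 2 ^ n) :=
        setLIntegral_mono measurable_const fun _ hx =>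
          ENNReal.ofReal_le_ofReal (abs_det_volMapFDeriv_le hn hσ (hsA hx))
    _ = ENNReal.ofReal (1 + σ * n * 2 ^ n) * volume s := setLIntegral_const _ _

theorem volume_image_volMap_le_of_subset_ball (hn : 1 ≤ n) (hr : 0 < r)
    (hσ : σ ∈ Set.Ioo (0 : ℝ) (2 ^ n)⁻¹) (hs : MeasurableSet s) (hsB : s ⊆ Metric.ball 0 r) :
    volume (volMap n r σ '' s) ≤ ENNReal.ofReal (1 + σ * n * 2 ^ n) * volume s := by
  set B := Metric.closedBall (0 : EuclideanSpace ℝ (Fin n)) (r / 2)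
  have hK : 1 ≤ ENNReal.ofReal (1 + σ * n * 2 ^ n) :=
    ENNReal.one_le_ofReal.mpr (le_add_of_nonneg_right (by have := hσ.1; positivity))
  calc volume (volMap n r σ '' s)
      ≤ volume (volMap n r σ '' (s ∩ B)) + volume (volMap n r σ '' (s \ B)) := by
        conv_lhs => rw [← Set.inter_union_sdiff s B, Set.image_union]
        exact measure_union_le _ _
    _ ≤ volume (s ∩ B) + ENNReal.ofReal (1 + σ * n * 2 ^ n) * volume (s \ B) :=
        add_le_add (volume_image_volMap_le_of_subset_closedBall hr hσ Set.inter_subset_right)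
          (volume_image_volMap_le_of_subset_annulus hn hσ (hs.diff measurableSet_closedBall)
            (Set.sdiff_subset_sdiff_left hsB))
    _ ≤ ENNReal.ofReal (1 + σ * n * 2 ^ n) * (volume (s ∩ B) + volume (s \ B)) := by
        rw [mul_add]
        gcongr
        exact le_mul_of_one_le_left' hK
    _ = ENNReal.ofReal (1 + σ * n * 2 ^ n) * volume s := by
        rw [measure_inter_add_sdiff _ measurableSet_closedBall]

end VolMapImage

theorem volume_image_volMap_le {n : ℕ} (hn : 1 ≤ n) {r σ : ℝ} (hr : 0 < r)
    (hσ : σ ∈ Set.Ioo (0 : ℝ) (2 ^ n)⁻¹) {E : Set (EuclideanSpace ℝ (Fin n))}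
    (hE : MeasurableSet E) :
    volume (volMap n r σ '' E) ≤ volume E + ENNReal.ofReal (σ * n * 2 ^ n * r ^ n) *
      volume (Metric.ball (0 : EuclideanSpace ℝ (Fin n)) 1) := by
  set B := Metric.ball (0 : EuclideanSpace ℝ (Fin n)) r
  have hK : 0 ≤ σ * n * 2 ^ n := by have := hσ.1; positivity
  have houtside : volMap n r σ '' (E \ B) = E \ B :=
    (Set.image_congr fun x hx => volMap_of_le_norm hr.le
      (not_lt.mp fun h => hx.2 (mem_ball_zero_iff.mpr h))).trans (Set.image_id _)
  calc volume (volMap n r σ '' E)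
      ≤ volume (volMap n r σ '' (E ∩ B)) + volume (volMap n r σ '' (E \ B)) := by
        conv_lhs => rw [← Set.inter_union_sdiff E B, Set.image_union]
        exact measure_union_le _ _
    _ ≤ ENNReal.ofReal (1 + σ * n * 2 ^ n) * volume (E ∩ B) + volume (E \ B) := by
        rw [houtside]
        gcongr
        exact volume_image_volMap_le_of_subset_ball hn hr hσ (hE.inter measurableSet_ball)
          Set.inter_subset_right
    _ = volume E + ENNReal.ofReal (σ * n * 2 ^ n) * volume (E ∩ B) := by
        rw [ENNReal.ofReal_add zero_le_one hK, ENNReal.ofReal_one, add_mul, one_mul,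
          add_right_comm, measure_inter_add_sdiff _ measurableSet_ball]
    _ ≤ volume E + ENNReal.ofReal (σ * n * 2 ^ n) * volume B := by
        gcongr
        exact Set.inter_subset_right
    _ = volume E + ENNReal.ofReal (σ * n * 2 ^ n * r ^ n) *
          volume (Metric.ball (0 : EuclideanSpace ℝ (Fin n)) 1) := by
        rw [Measure.addHaar_ball_of_pos _ _ hr, finrank_euclideanSpace_fin, ← mul_assoc,
          ← ENNReal.ofReal_mul hK]

/-- Upper volume increase bound for the volume-adjusting map:
for every measurable set `E` of finite measure, `|f(E)| − |E| ≤ 2ⁿ n ω_n σ rⁿ`. -/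
theorem volMap_volume_increase_upper_bound
    (n : ℕ) (hn : 1 ≤ n) (r σ : ℝ) (hr : 0 < r) (hσ : σ ∈ Set.Ioo (0 : ℝ) (2 ^ n)⁻¹)
    (E : Set (EuclideanSpace ℝ (Fin n))) (hE : MeasurableSet E) (hEfin : volume E < ⊤) :
    (volume (volMap n r σ '' E)).toReal - (volume E).toReal ≤
      2 ^ n * n * (volume (Metric.ball (0 : EuclideanSpace ℝ (Fin n)) 1)).toReal *
        σ * r ^ n := by
  have hincrease_fin : ENNReal.ofReal (σ * n * 2 ^ n * r ^ n) *
      volume (Metric.ball (0 : EuclideanSpace ℝ (Fin n)) 1) ≠ ⊤ :=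
    ENNReal.mul_ne_top ENNReal.ofReal_ne_top measure_ball_lt_top.ne
  have h := ENNReal.toReal_mono (ENNReal.add_ne_top.mpr ⟨hEfin.ne, hincrease_fin⟩)
    (volume_image_volMap_le hn hr hσ hE)
  rw [ENNReal.toReal_add hEfin.ne hincrease_fin, ENNReal.toReal_mul,
    ENNReal.toReal_ofReal (by have := hσ.1; positivity)] at h
  linarith
end

section
/- Let n ≥ 1. There exists a constant C > 0, depending only on n, such that for every r > 0 and every σ ∈ (0, 2^{−n}), letting f be the map defined by f(x) = (1 − σ(2ⁿ − 1))x if |x| < r/2; f(x) = x + σ(1 − rⁿ/|x|ⁿ)x if r/2 ≤ |x| < r; f(x) = x if |x| ≥ r, and letting g := f^{−1} be its inverse, one has ‖Dg(y) − I‖ ≤ C·σ for every y ∈ ℝⁿ at which g is differentiable. -/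
open scoped RealInnerProductSpace

theorem norm_fderiv_sub_id_le_of_rightInverse {E : Type*} [NormedAddCommGroup E]
    [NormedSpace ℝ E] {f g : E → E} {c L : ℝ} (hc : 0 < c) (hL : 0 ≤ L)
    (hf : ∀ x y, c * ‖x - y‖ ≤ ‖f x - f y‖) (hf_sub : ∀ x y, ‖(f x - x) - (f y - y)‖ ≤ L * ‖x - y‖)
    (hgf : Function.RightInverse g f) {y : E} (hg : DifferentiableAt ℝ g y) :
    ‖fderiv ℝ g y - ContinuousLinearMap.id ℝ E‖ ≤ L / c := by
  have hg_lip : ∀ z, ‖(g z - z) - (g y - y)‖ ≤ L / c * ‖z - y‖ := fun z => by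
    have hgz : c * ‖g z - g y‖ ≤ ‖z - y‖ := by simpa only [hgf z, hgf y] using hf (g z) (g y)
    calc ‖(g z - z) - (g y - y)‖ = ‖(f (g z) - g z) - (f (g y) - g y)‖ := by
          rw [hgf z, hgf y, ← norm_neg]; congr 1; abel
      _ ≤ L * ‖g z - g y‖ := hf_sub _ _
      _ ≤ L / c * ‖z - y‖ := by
          rw [div_mul_eq_mul_div, le_div_iff₀ hc, mul_assoc]; gcongr; linarith
  have hbound := norm_fderiv_le_of_lip' ℝ (by positivity) (Filter.Eventually.of_forall hg_lip)
  rwa [fderiv_fun_sub hg differentiableAt_fun_id, fderiv_fun_id] at hbound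

section Radial

variable {E : Type*} [NormedAddCommGroup E]

theorem norm_smul_norm_sub_smul_norm_le [NormedSpace ℝ E] {ψ : ℝ → ℝ} {B L R : ℝ}
    (hψ : ∀ s t, |ψ s - ψ t| ≤ L * |s - t|) (hB : ∀ t, |ψ t| ≤ B) (hR0 : 0 ≤ R)
    (hR : ∀ t, R ≤ t → ψ t = 0) (x y : E) : ‖ψ ‖x‖ • x - ψ ‖y‖ • y‖ ≤ (B + L * R) * ‖x - y‖ := by
  wlog hxy : ‖y‖ ≤ ‖x‖ generalizing x y
  · simpa only [norm_sub_rev] using this y x (le_of_not_ge hxy)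
  have hL : 0 ≤ L := by simpa using (abs_nonneg _).trans (hψ 1 0)
  have hcross : |ψ ‖x‖ - ψ ‖y‖| * ‖y‖ ≤ L * R * ‖x - y‖ := by
    rcases le_or_gt R ‖y‖ with hy | hy
    · simp only [hR _ hy, hR _ (hy.trans hxy), sub_zero, abs_zero, zero_mul]
      positivity
    calc |ψ ‖x‖ - ψ ‖y‖| * ‖y‖ ≤ (L * ‖x - y‖) * R := by
          gcongr
          exact (hψ _ _).trans (by gcongr; exact abs_norm_sub_norm_le x y)
      _ = L * R * ‖x - y‖ := by ring
  calc ‖ψ ‖x‖ • x - ψ ‖y‖ • y‖ = ‖ψ ‖x‖ • (x - y) + (ψ ‖x‖ - ψ ‖y‖) • y‖ := by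
        rw [smul_sub, sub_smul]; abel_nf
    _ ≤ |ψ ‖x‖| * ‖x - y‖ + |ψ ‖x‖ - ψ ‖y‖| * ‖y‖ := by
        refine (norm_add_le _ _).trans_eq ?_
        simp only [norm_smul, Real.norm_eq_abs]
    _ ≤ B * ‖x - y‖ + L * R * ‖x - y‖ := by gcongr; exact hB _
    _ = (B + L * R) * ‖x - y‖ := by ring

theorem mul_norm_sub_le_norm_smul_norm_sub_smul_norm [InnerProductSpace ℝ E] {a : ℝ → ℝ} {c : ℝ}
    (ha : Monotone a) (hc : ∀ t, c ≤ a t) (x y : E) :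
    c * ‖x - y‖ ≤ ‖a ‖x‖ • x - a ‖y‖ • y‖ := by
  wlog hxy : ‖y‖ ≤ ‖x‖ generalizing x y
  · simpa only [norm_sub_rev] using this y x (le_of_not_ge hxy)
  rcases (norm_nonneg (x - y)).eq_or_lt with h0 | hpos
  · simp [← h0]
  have hx : 0 ≤ ⟪x, x - y⟫ := by
    rw [inner_sub_right, real_inner_self_eq_norm_sq]
    nlinarith [real_inner_le_norm x y, norm_nonneg x]
  -- The part `(a ‖x‖ - a ‖y‖) • x` of `a ‖x‖ • x - a ‖y‖ • y` only adds to the inner product.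
  have hinner : c * ‖x - y‖ ^ 2 ≤ ⟪a ‖x‖ • x - a ‖y‖ • y, x - y⟫ := by
    have hsplit : a ‖x‖ • x - a ‖y‖ • y = a ‖y‖ • (x - y) + (a ‖x‖ - a ‖y‖) • x := by
      rw [smul_sub, sub_smul]; abel
    rw [hsplit, inner_add_left, real_inner_smul_left, real_inner_smul_left,
      real_inner_self_eq_norm_sq]
    nlinarith [hc ‖y‖, sub_nonneg.2 (ha hxy)]
  have := hinner.trans (real_inner_le_norm _ _)
  nlinarith

theorem surjective_smul_norm [NormedSpace ℝ E] {a : ℝ → ℝ} {R : ℝ} (ha : Continuous a)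
    (hR : ∀ t, R ≤ t → a t = 1) : Function.Surjective fun x : E => a ‖x‖ • x := by
  intro y
  rcases eq_or_ne y 0 with rfl | hy
  · exact ⟨0, by simp⟩
  have hy0 : 0 < ‖y‖ := norm_pos_iff.2 hy
  set T := max ‖y‖ R
  have hT : a T * T = T := by rw [hR T (le_max_right _ _), one_mul]
  obtain ⟨t, ht, hat⟩ : ∃ t ∈ Set.Icc 0 T, a t * t = ‖y‖ :=
    intermediate_value_Icc (f := fun t => a t * t) (by positivity)
      (ha.mul continuous_id).continuousOn ⟨by simp, hT.symm ▸ le_max_left _ _⟩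
  refine ⟨(t / ‖y‖) • y, ?_⟩
  have hnorm : ‖(t / ‖y‖) • y‖ = t := by
    rw [norm_smul, Real.norm_of_nonneg (by have := ht.1; positivity), div_mul_cancel₀ _ hy0.ne']
  simp only [hnorm, smul_smul, ← mul_div_assoc, hat, div_self hy0.ne', one_smul]

end Radial

theorem abs_div_max_half_sub_le {r : ℝ} (hr : 0 < r) (s t : ℝ) :
    |r / max s (r / 2) - r / max t (r / 2)| ≤ 4 / r * |s - t| := by
  set u := max s (r / 2)
  set v := max t (r / 2)
  have hu0 : 0 < u := by positivity
  have hv0 : 0 < v := by positivity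
  have huv : r ≤ 4 / r * (u * v) := by
    rw [div_mul_eq_mul_div, le_div_iff₀ hr]
    nlinarith [le_max_right s (r / 2), le_max_right t (r / 2)]
  rw [div_sub_div _ _ hu0.ne' hv0.ne', abs_div, abs_of_pos (mul_pos hu0 hv0),
    div_le_iff₀ (mul_pos hu0 hv0)]
  calc |r * v - u * r| = r * |v - u| := by
        rw [show r * v - u * r = r * (v - u) by ring, abs_mul, abs_of_pos hr]
    _ ≤ r * |s - t| := by
        rw [abs_sub_comm s t]
        exact mul_le_mul_of_nonneg_left (abs_max_sub_max_le_abs t s _) hr.le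
    _ ≤ 4 / r * |s - t| * (u * v) := by
        rw [mul_right_comm]; gcongr

-- Clamping by `max` and `min` turns the three cases of `volMap` into one continuous formula:
-- `volMap n r σ x = (1 + σ * volProfile n r ‖x‖) • x`.
noncomputable def volProfile (n : ℕ) (r t : ℝ) : ℝ := min 0 (1 - (r / max t (r / 2)) ^ n)

section VolProfile

variable {n : ℕ} {r : ℝ}

theorem volProfile_nonpos (t : ℝ) : volProfile n r t ≤ 0 := min_le_left _ _

theorem volProfile_of_le (hr : 0 < r) {t : ℝ} (ht : r ≤ t) : volProfile n r t = 0 := by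
  have hpow : (r / t) ^ n ≤ 1 :=
    pow_le_one₀ (div_nonneg hr.le (hr.le.trans ht)) ((div_le_one (hr.trans_le ht)).2 ht)
  rw [volProfile, max_eq_left (by linarith), min_eq_left (by linarith)]

theorem volProfile_of_lt_half (hr : 0 < r) {t : ℝ} (ht : t < r / 2) :
    volProfile n r t = 1 - 2 ^ n := by
  have h2 : r / (r / 2) = 2 := by field_simp
  have h2n : (1 : ℝ) ≤ 2 ^ n := one_le_pow₀ one_le_two
  rw [volProfile, max_eq_right ht.le, h2, min_eq_right (by linarith)]

theorem volProfile_of_le_of_lt {t : ℝ} (ht : r / 2 ≤ t) (htr : t < r) :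
    volProfile n r t = 1 - r ^ n / t ^ n := by
  have ht0 : 0 < t := by linarith
  have hpow : 1 ≤ (r / t) ^ n := one_le_pow₀ ((one_le_div ht0).2 htr.le)
  rw [volProfile, max_eq_left ht, min_eq_right (by linarith), div_pow]

theorem volMap_eq_smul (hr : 0 < r) (σ : ℝ) (x : EuclideanSpace ℝ (Fin n)) :
    volMap n r σ x = (1 + σ * volProfile n r ‖x‖) • x := by
  rw [volMap]
  split_ifs with h₁ h₂
  · rw [volProfile_of_lt_half hr h₁]; ring_nf
  · rw [volProfile_of_le_of_lt (not_lt.1 h₁) h₂, add_smul, one_smul]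
  · rw [volProfile_of_le hr (not_lt.1 h₂)]; simp

theorem one_sub_two_pow_le_volProfile (hr : 0 < r) (t : ℝ) : 1 - 2 ^ n ≤ volProfile n r t := by
  have hpow : (r / max t (r / 2)) ^ n ≤ 2 ^ n := by
    gcongr
    rw [div_le_iff₀ (by positivity)]
    linarith [le_max_right t (r / 2)]
  have h2n : (1 : ℝ) ≤ 2 ^ n := one_le_pow₀ one_le_two
  exact le_min (by linarith) (by linarith)

theorem volProfile_monotone (hr : 0 < r) : Monotone (volProfile n r) := fun s t hst => by
  have : 0 < max s (r / 2) := by positivity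
  unfold volProfile
  gcongr

theorem abs_volProfile_sub_le (hr : 0 < r) (s t : ℝ) :
    |volProfile n r s - volProfile n r t| ≤ n * 2 ^ (n + 2) / r * |s - t| := by
  set u := max s (r / 2)
  set v := max t (r / 2)
  have hinv : ∀ w, |r / max w (r / 2)| ≤ 2 := fun w => by
    have hw0 : 0 < max w (r / 2) := by positivity
    rw [abs_of_pos (div_pos hr hw0), div_le_iff₀ hw0]; linarith [le_max_right w (r / 2)]
  calc |volProfile n r s - volProfile n r t| ≤ |(r / v) ^ n - (r / u) ^ n| := by
        simpa [volProfile] using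
          abs_min_sub_min_le_max (0 : ℝ) (1 - (r / u) ^ n) 0 (1 - (r / v) ^ n)
    _ ≤ |r / u - r / v| * n * max |r / u| |r / v| ^ (n - 1) := by
        rw [abs_sub_comm]; exact abs_pow_sub_pow_le ..
    _ ≤ (4 / r * |s - t|) * n * 2 ^ n := by
        gcongr
        · exact abs_div_max_half_sub_le hr s t
        calc max |r / u| |r / v| ^ (n - 1) ≤ 2 ^ (n - 1) := by
              gcongr; exact max_le (hinv s) (hinv t)
          _ ≤ 2 ^ n := pow_le_pow_right₀ one_le_two (Nat.sub_le n 1)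
    _ = n * 2 ^ (n + 2) / r * |s - t| := by ring

theorem continuous_volProfile (hr : 0 < r) : Continuous (volProfile n r) :=
  continuous_const.min <| continuous_const.sub <| (continuous_const.div
    (continuous_id.max continuous_const) fun t => (by positivity : (0 : ℝ) < r / 2).trans_le
      (le_max_right t _) |>.ne').pow n

theorem abs_volProfile_le (hr : 0 < r) (t : ℝ) : |volProfile n r t| ≤ 2 ^ n :=
  abs_le.2 ⟨by linarith [one_sub_two_pow_le_volProfile (n := n) hr t],
    (volProfile_nonpos t).trans (by positivity)⟩

end VolProfile

section VolMap

variable {n : ℕ} {r σ : ℝ}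

theorem volMap_sub_self (hr : 0 < r) (x : EuclideanSpace ℝ (Fin n)) :
    volMap n r σ x - x = σ • volProfile n r ‖x‖ • x := by
  rw [volMap_eq_smul hr, add_smul, one_smul, mul_smul, add_sub_cancel_left]

theorem norm_volMap_sub_self_sub_le (hr : 0 < r) (hσ : 0 ≤ σ) (x y : EuclideanSpace ℝ (Fin n)) :
    ‖(volMap n r σ x - x) - (volMap n r σ y - y)‖ ≤ σ * (2 ^ n + n * 2 ^ (n + 2)) * ‖x - y‖ := by
  have hψ := norm_smul_norm_sub_smul_norm_le (abs_volProfile_sub_le (n := n) hr)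
    (abs_volProfile_le hr) hr.le (fun _ => volProfile_of_le hr) x y
  rw [div_mul_cancel₀ _ hr.ne'] at hψ
  rw [volMap_sub_self hr, volMap_sub_self hr, ← smul_sub, norm_smul, Real.norm_of_nonneg hσ,
    mul_assoc]
  gcongr

theorem inv_two_pow_mul_norm_sub_le_norm_volMap_sub (hr : 0 < r) (hσ₀ : 0 ≤ σ)
    (hσ₁ : σ ≤ (2 ^ n)⁻¹) (x y : EuclideanSpace ℝ (Fin n)) :
    (2 ^ n : ℝ)⁻¹ * ‖x - y‖ ≤ ‖volMap n r σ x - volMap n r σ y‖ := by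
  simp only [volMap_eq_smul hr]
  refine mul_norm_sub_le_norm_smul_norm_sub_smul_norm
    (((volProfile_monotone hr).const_mul hσ₀).const_add 1) (fun t => ?_) x y
  have h2n : (1 : ℝ) ≤ 2 ^ n := one_le_pow₀ one_le_two
  calc (2 ^ n : ℝ)⁻¹ = 1 + (2 ^ n)⁻¹ * (1 - 2 ^ n) := by field_simp; ring
    _ ≤ 1 + σ * (1 - 2 ^ n) := by nlinarith
    _ ≤ 1 + σ * volProfile n r t := by gcongr; exact one_sub_two_pow_le_volProfile hr t

theorem volMap_surjective (hr : 0 < r) (σ : ℝ) : Function.Surjective (volMap n r σ) := by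
  rw [show volMap n r σ = fun x => (1 + σ * volProfile n r ‖x‖) • x from
    funext (volMap_eq_smul hr σ)]
  exact surjective_smul_norm
    (continuous_const.add (continuous_const.mul (continuous_volProfile hr)))
    fun t (ht : r ≤ t) => by simp [volProfile_of_le hr ht]

end VolMap

theorem volMap_inverse_derivative_close_to_identity_general
    (n : ℕ) :
    ∃ C > (0 : ℝ), ∀ (r : ℝ), 0 < r → ∀ σ ∈ Set.Ioo (0 : ℝ) (2 ^ n)⁻¹,
      ∀ y : EuclideanSpace ℝ (Fin n),
        DifferentiableAt ℝ (Function.invFun (volMap n r σ)) y →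
        ‖fderiv ℝ (Function.invFun (volMap n r σ)) y -
            ContinuousLinearMap.id ℝ (EuclideanSpace ℝ (Fin n))‖ ≤ C * σ := by
  refine ⟨2 ^ n * (2 ^ n + n * 2 ^ (n + 2)), by positivity, fun r hr σ ⟨hσ₀, hσ₁⟩ y hg => ?_⟩
  calc _ ≤ σ * (2 ^ n + n * 2 ^ (n + 2)) / (2 ^ n)⁻¹ :=
        norm_fderiv_sub_id_le_of_rightInverse (by positivity) (by positivity)
          (inv_two_pow_mul_norm_sub_le_norm_volMap_sub hr hσ₀.le hσ₁.le)
          (norm_volMap_sub_self_sub_le hr hσ₀.le)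
          (Function.rightInverse_invFun (volMap_surjective hr σ)) hg
    _ = 2 ^ n * (2 ^ n + n * 2 ^ (n + 2)) * σ := by field_simp

/-- Derivative bound for the inverse of the volume-adjusting map:
there is `C = C(n) > 0` such that for every `r > 0`, `σ ∈ (0, 2^{−n})` and every point `y`
at which `g = f⁻¹` is differentiable, `‖Dg(y) − I‖ ≤ C σ`. -/
theorem volMap_inverse_derivative_close_to_identity
    (n : ℕ) (hn : 1 ≤ n) :
    ∃ C > (0 : ℝ), ∀ (r : ℝ), 0 < r → ∀ σ ∈ Set.Ioo (0 : ℝ) (2 ^ n)⁻¹,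
      ∀ y : EuclideanSpace ℝ (Fin n),
        DifferentiableAt ℝ (Function.invFun (volMap n r σ)) y →
        ‖fderiv ℝ (Function.invFun (volMap n r σ)) y -
            ContinuousLinearMap.id ℝ (EuclideanSpace ℝ (Fin n))‖ ≤ C * σ :=
  volMap_inverse_derivative_close_to_identity_general n
end
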